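/- Let c(x) be a quasi-constant (c(x q^{-2}) = c(x) for all x, with q ≠ 0, ±1) of the form c(x) = x^α r(x, log x), where α ∈ ℂ and r(x,y) is rational in x and polynomial in y. Then r(x,y) does not depend on y. -/

import Mathlib

open Polynomial

section QuasiConstantAux

open Filter Finset

private lemma coeff_comp_C_mul_X (w : ℂ) (p : ℂ[X]) (k : ℕ) :
    (p.comp (C w * X)).coeff k = w ^ k * p.coeff k := by
  induction p using Polynomial.induction_on' with
  | add p q hp hq => simp [add_comp, hp, hq, mul_add]
  | monomial n a =>
    rw [monomial_comp, mul_pow, ← C_pow, ← mul_assoc, ← C_mul, C_mul_X_pow_eq_monomial,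
      coeff_monomial, coeff_monomial]
    split <;> simp_all [mul_comm]

private lemma eventually_eval_ne (r : ℂ[X]) (hr : r ≠ 0) :
    ∀ᶠ x : ℝ in atTop, r.eval ↑x ≠ 0 := by
  have hfin : {x : ℝ | r.eval ↑x = 0}.Finite := by
    have := (Polynomial.finite_setOf_isRoot hr).preimage
      (Set.injOn_of_injective Complex.ofReal_injective)
    simpa [Set.preimage, Polynomial.IsRoot] using this
  exact (hfin.eventually_cofinite_notMem).filter_mono atTop_le_cofinite

private lemma poly_eq_zero_of_eventually (p : ℂ[X])
    (h : ∀ᶠ t : ℝ in atTop, p.eval ↑t = 0) : p = 0 := by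
  apply Polynomial.eq_zero_of_infinite_isRoot
  obtain ⟨a, ha⟩ := eventually_atTop.mp h
  apply Set.Infinite.mono (s := (fun t : ℝ => (t : ℂ)) '' Set.Ici a)
  · rintro z ⟨t, ht, rfl⟩
    exact ha t ht
  · exact Set.Infinite.image (Set.injOn_of_injective Complex.ofReal_injective)
      (Set.Ici_infinite a)

private lemma tendsto_poly_mul_exp (p : ℂ[X]) (c : ℂ) (hc : c.re < 0) :
    Tendsto (fun t : ℝ => p.eval ↑t * Complex.exp (c * ↑t)) atTop (nhds 0) := by
  induction p using Polynomial.induction_on' with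
  | add p q hp hq =>
    have := hp.add hq
    simp only [eval_add, add_mul, add_zero] at this ⊢
    exact this
  | monomial n a =>
    have hreal : Tendsto (fun t : ℝ => ‖a‖ * (t ^ n * Real.exp (c.re * t))) atTop (nhds 0) := by
      have h1 : Tendsto (fun t : ℝ => (-c.re) * t) atTop atTop :=
        Tendsto.const_mul_atTop (by linarith) tendsto_id
      have h2 := (Real.tendsto_pow_mul_exp_neg_atTop_nhds_zero n).comp h1
      have h3 : Tendsto (fun t : ℝ => ((-c.re) * t) ^ n * Real.exp (c.re * t)) atTop (nhds 0) := by
        refine h2.congr fun t => ?_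
        simp only [Function.comp_apply]
        ring_nf
      have h4 := h3.const_mul (‖a‖ * ((-c.re) ^ n)⁻¹)
      rw [mul_zero] at h4
      refine h4.congr fun t => ?_
      have hcne : (-c.re) ^ n ≠ 0 := pow_ne_zero _ (by linarith)
      field_simp
      ring
    refine squeeze_zero_norm' ?_ hreal
    filter_upwards [eventually_ge_atTop (0:ℝ)] with t ht
    have hre : (c * ↑t).re = c.re * t := by simp [Complex.mul_re]
    have : ‖(monomial n a).eval (↑t : ℂ) * Complex.exp (c * ↑t)‖
        = ‖a‖ * (t ^ n * Real.exp (c.re * t)) := by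
      rw [eval_monomial, norm_mul, norm_mul, norm_pow, 
        Complex.norm_exp, hre, Complex.norm_real, Real.norm_eq_abs, abs_of_nonneg ht]
      ring
    rw [this]

private lemma poly_eq_zero_of_tendsto_zero (p : ℂ[X])
    (h : Tendsto (fun t : ℝ => p.eval ↑t) atTop (nhds 0)) : p = 0 := by
  by_contra hp
  set d := p.natDegree with hd
  set g : ℝ → ℂ := fun t => ∑ k ∈ range (d + 1), p.coeff k * ((t : ℂ)⁻¹) ^ (d - k) with hg
  have hinv : Tendsto (fun t : ℝ => ((t : ℂ))⁻¹) atTop (nhds 0) := by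
    have := (Complex.continuous_ofReal.tendsto 0).comp tendsto_inv_atTop_zero
    refine Tendsto.congr (fun t => ?_) (by simpa using this)
    simp [Function.comp, Complex.ofReal_inv]
  have h1 : Tendsto g atTop (nhds (p.coeff d)) := by
    have h0 : Tendsto g atTop
        (nhds (∑ k ∈ range (d + 1), if k = d then p.coeff d else 0)) := by
      apply tendsto_finset_sum
      intro k hk
      rcases eq_or_ne k d with rfl | hkd
      · simp only [Nat.sub_self, pow_zero, mul_one, if_pos rfl]
        exact tendsto_const_nhds
      · have hdk : d - k ≠ 0 := by
          simp only [mem_range] at hk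
          omega
        have h5 := hinv.pow (d - k)
        rw [zero_pow hdk] at h5
        have h6 := h5.const_mul (p.coeff k)
        rw [mul_zero] at h6
        rw [if_neg hkd]
        exact h6
    simpa using h0
  have h2 : Tendsto g atTop (nhds 0) := by
    have hbound : ∀ᶠ t : ℝ in atTop, ‖g t‖ ≤ ‖p.eval (↑t : ℂ)‖ := by
      filter_upwards [eventually_ge_atTop (1:ℝ)] with t ht
      have ht0 : (t : ℂ) ≠ 0 := by
        simpa using (by linarith : t ≠ 0)
      have hgt : g t = p.eval ↑t * ((t : ℂ)⁻¹) ^ d := by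
        rw [hg, Polynomial.eval_eq_sum_range, Finset.sum_mul]
        apply Finset.sum_congr rfl
        intro k hk
        simp only [mem_range] at hk
        have hkd : k ≤ d := by omega
        rw [inv_pow, inv_pow, pow_sub₀ _ ht0 hkd]
        field_simp
      rw [hgt, norm_mul, norm_pow, norm_inv]
      have h1t : 1 ≤ ‖(t:ℂ)‖ := by
        rw [Complex.norm_real, Real.norm_eq_abs, abs_of_nonneg (by linarith)]
        linarith
      have hle1 : ‖(t:ℂ)‖⁻¹ ^ d ≤ 1 := by
        apply pow_le_one₀ (by positivity)
        exact inv_le_one_of_one_le₀ h1t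
      calc ‖p.eval ↑t‖ * ‖(t:ℂ)‖⁻¹ ^ d ≤ ‖p.eval ↑t‖ * 1 :=
            mul_le_mul_of_nonneg_left hle1 (norm_nonneg _)
        _ = ‖p.eval ↑t‖ := mul_one _
    have hnorm : Tendsto (fun t : ℝ => ‖p.eval (↑t : ℂ)‖) atTop (nhds 0) := by
      simpa using h.norm
    exact squeeze_zero_norm' hbound hnorm
  have : p.coeff d = 0 := tendsto_nhds_unique h1 h2
  exact (Polynomial.leadingCoeff_ne_zero.mpr hp) this

private lemma exp_poly_eq_zero : ∀ (K : ℕ) (Q : ℕ → ℂ[X]),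
    (∀ᶠ t : ℝ in atTop, ∑ k ∈ range (K + 1), (Q k).eval ↑t * Complex.exp (k * ↑t) = 0) →
    ∀ k ≤ K, Q k = 0 := by
  intro K
  induction K with
  | zero =>
    intro Q h k hk
    interval_cases k
    apply poly_eq_zero_of_eventually
    refine h.mono fun t ht => ?_
    simpa using ht
  | succ K ih =>
    intro Q h
    have hQK : Q (K + 1) = 0 := by
      apply poly_eq_zero_of_tendsto_zero
      have hev : ∀ᶠ t : ℝ in atTop, (Q (K + 1)).eval ↑t
          = -∑ k ∈ range (K + 1), (Q k).eval ↑t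
              * Complex.exp (((k : ℂ) - (K + 1 : ℕ)) * ↑t) := by
        refine h.mono fun t ht => ?_
        rw [Finset.sum_range_succ] at ht
        have hexp : Complex.exp (((K + 1 : ℕ) : ℂ) * ↑t) ≠ 0 := Complex.exp_ne_zero _
        have := congrArg (· * (Complex.exp (((K + 1 : ℕ) : ℂ) * ↑t))⁻¹) ht
        simp only [add_mul, zero_mul] at this
        rw [mul_assoc, mul_inv_cancel₀ hexp, mul_one] at this
        have h7 := eq_neg_of_add_eq_zero_right this
        rw [h7, Finset.sum_mul, neg_inj]
        apply Finset.sum_congr rfl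
        intro k _
        rw [mul_assoc]
        congr 1
        rw [sub_mul, Complex.exp_sub, div_eq_mul_inv]
      have hlim : Tendsto (fun t : ℝ => -∑ k ∈ range (K + 1), (Q k).eval ↑t
          * Complex.exp (((k : ℂ) - (K + 1 : ℕ)) * ↑t)) atTop (nhds 0) := by
        rw [← neg_zero]
        apply Tendsto.neg
        have h0 : (0 : ℂ) = ∑ _k ∈ range (K + 1), (0 : ℂ) := by simp
        rw [h0]
        apply tendsto_finset_sum
        intro k hk
        apply tendsto_poly_mul_exp
        simp only [Complex.sub_re, Complex.natCast_re]
        have : (k : ℝ) < (K + 1 : ℕ) := by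
          exact_mod_cast mem_range.mp hk
        linarith
      exact hlim.congr' (Filter.EventuallyEq.symm hev)
    intro k hk
    rcases eq_or_ne k (K + 1) with rfl | hne
    · exact hQK
    · refine ih Q ?_ k (by omega)
      refine h.mono fun t ht => ?_
      rw [Finset.sum_range_succ, hQK] at ht
      simpa using ht

private lemma log_poly_eq_zero (n : ℕ) (T : ℕ → ℂ[X])
    (h : ∀ᶠ x : ℝ in atTop,
      ∑ j ∈ range (n + 1), (T j).eval ↑x * Complex.log ↑x ^ j = 0) :
    ∀ j ≤ n, T j = 0 := by
  set N := (range (n + 1)).sup (fun j => (T j).natDegree) with hN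
  have hdeg : ∀ j ≤ n, (T j).natDegree < N + 1 := by
    intro j hj
    have : (T j).natDegree ≤ N := Finset.le_sup (f := fun j => (T j).natDegree) (mem_range.mpr (by omega))
    omega
  set Qk : ℕ → ℂ[X] := fun k => ∑ j ∈ range (n + 1), C ((T j).coeff k) * X ^ j with hQk
  have key : ∀ k ≤ N, Qk k = 0 := by
    apply exp_poly_eq_zero
    have h2 := Real.tendsto_exp_atTop.eventually h
    filter_upwards [h2, eventually_gt_atTop (0:ℝ)] with t ht _
    rw [← ht]
    have hlog : Complex.log ↑(Real.exp t) = ↑t := by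
      rw [← Complex.ofReal_log (Real.exp_pos t).le, Real.log_exp]
    calc ∑ k ∈ range (N + 1), (Qk k).eval ↑t * Complex.exp (↑k * ↑t)
        = ∑ k ∈ range (N + 1), ∑ j ∈ range (n + 1),
            (T j).coeff k * Complex.exp (↑k * ↑t) * (↑t) ^ j := by
          apply Finset.sum_congr rfl
          intro k _
          rw [hQk]
          simp only [eval_finset_sum, eval_mul, eval_C, eval_pow, eval_X, Finset.sum_mul]
          apply Finset.sum_congr rfl
          intro j _
          ring
      _ = ∑ j ∈ range (n + 1), ∑ k ∈ range (N + 1),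
            (T j).coeff k * Complex.exp (↑k * ↑t) * (↑t) ^ j := Finset.sum_comm
      _ = ∑ j ∈ range (n + 1), (T j).eval ↑(Real.exp t) * Complex.log ↑(Real.exp t) ^ j := by
          apply Finset.sum_congr rfl
          intro j hj
          rw [hlog, ← Finset.sum_mul]
          congr 1
          rw [Polynomial.eval_eq_sum_range' (hdeg j (Nat.lt_succ_iff.mp (mem_range.mp hj)))]
          apply Finset.sum_congr rfl
          intro k _
          congr 1
          rw [show ((k : ℂ) * ↑t) = (((k : ℝ) * t : ℝ) : ℂ) by push_cast; ring,
            ← Complex.ofReal_exp, Real.exp_nat_mul, Complex.ofReal_pow]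
  intro j hj
  ext k
  rcases le_or_gt k N with hk | hk
  · have h0 := key k hk
    have : (Qk k).coeff j = (T j).coeff k := by
      rw [hQk]
      rw [finset_sum_coeff]
      rw [Finset.sum_eq_single j]
      · simp
      · intro b _ hbj
        simp [coeff_C_mul, coeff_X_pow, Ne.symm hbj]
      · intro hjmem
        exact absurd (mem_range.mpr (by omega)) hjmem
    rw [h0] at this
    simp only [coeff_zero] at this
    simp [← this]
  · simp [Polynomial.coeff_eq_zero_of_natDegree_lt (lt_of_lt_of_le (hdeg j hj) (by omega) : (T j).natDegree < k)]

private lemma coe_comp_rescale (w : ℂ) (r : ℂ[X]) :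
    ((r.comp (C w * X) : ℂ[X]) : PowerSeries ℂ)
      = PowerSeries.rescale w (r : PowerSeries ℂ) := by
  apply PowerSeries.ext
  intro k
  rw [Polynomial.coeff_coe, PowerSeries.coeff_rescale, Polynomial.coeff_coe,
    coeff_comp_C_mul_X]

private lemma core_vanish (w lam ν μ : ℂ) (hμ : μ ≠ 0)
    (D1 f g : ℂ[X]) (hD1 : D1.coeff 0 ≠ 0)
    (E1 : C lam * D1 * (f.comp (C w * X)) = C ν * D1.comp (C w * X) * f)
    (E2 : C lam * D1 * (g.comp (C w * X)) + C μ * (D1.comp (C w * X) * f)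
        = C ν * D1.comp (C w * X) * g) :
    f = 0 := by
  classical
  have E1p := congrArg (fun r : ℂ[X] => (r : PowerSeries ℂ)) E1
  have E2p := congrArg (fun r : ℂ[X] => (r : PowerSeries ℂ)) E2
  simp only [Polynomial.coe_mul, Polynomial.coe_add, Polynomial.coe_C,
    coe_comp_rescale] at E1p E2p
  set U : PowerSeries ℂ := (D1 : PowerSeries ℂ) with hU
  set F : PowerSeries ℂ := (f : PowerSeries ℂ) with hF
  set G : PowerSeries ℂ := (g : PowerSeries ℂ) with hG
  set V : PowerSeries ℂ := PowerSeries.rescale w U with hV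
  have hU0 : PowerSeries.constantCoeff U ≠ 0 := by
    rwa [hU, Polynomial.constantCoeff_coe]
  have hV0 : PowerSeries.constantCoeff V ≠ 0 := by
    rw [hV, ← PowerSeries.coeff_zero_eq_constantCoeff, PowerSeries.coeff_rescale]
    rw [← PowerSeries.coeff_zero_eq_constantCoeff] at hU0
    simpa using hU0
  have hUU : U * U⁻¹ = 1 := PowerSeries.mul_inv_cancel _ hU0
  have hVV : V * V⁻¹ = 1 := PowerSeries.mul_inv_cancel _ hV0
  have hresinv : PowerSeries.rescale w U⁻¹ = V⁻¹ := by
    have h1 : PowerSeries.rescale w U⁻¹ * V = 1 := by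
      rw [hV, ← map_mul, PowerSeries.inv_mul_cancel _ hU0, map_one]
    have h2 := congrArg (· * V⁻¹) h1
    simpa [mul_assoc, hVV] using h2
  set A : PowerSeries ℂ := F * U⁻¹ with hA
  set B : PowerSeries ℂ := G * U⁻¹ with hB
  have hrA : PowerSeries.rescale w A = PowerSeries.rescale w F * V⁻¹ := by
    rw [hA, map_mul, hresinv]
  have hrB : PowerSeries.rescale w B = PowerSeries.rescale w G * V⁻¹ := by
    rw [hB, map_mul, hresinv]
  have hAeq : PowerSeries.C lam * PowerSeries.rescale w A = PowerSeries.C ν * A := by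
    rw [hrA, hA]
    linear_combination (U⁻¹ * V⁻¹) * E1p
      - (PowerSeries.C lam * PowerSeries.rescale w F * V⁻¹) * hUU
      + (PowerSeries.C ν * F * U⁻¹) * hVV
  have hBeq : PowerSeries.C lam * PowerSeries.rescale w B + PowerSeries.C μ * A
      = PowerSeries.C ν * B := by
    rw [hrB, hA, hB]
    linear_combination (U⁻¹ * V⁻¹) * E2p
      - (PowerSeries.C lam * PowerSeries.rescale w G * V⁻¹) * hUU
      + (PowerSeries.C ν * G * U⁻¹ - PowerSeries.C μ * F * U⁻¹) * hVV
  have hAk : ∀ k, PowerSeries.coeff k A = 0 := by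
    intro k
    by_contra hak
    have h1 := congrArg (PowerSeries.coeff k) hAeq
    simp only [PowerSeries.coeff_C_mul, PowerSeries.coeff_rescale] at h1
    have h2 := congrArg (PowerSeries.coeff k) hBeq
    simp only [map_add, PowerSeries.coeff_C_mul, PowerSeries.coeff_rescale] at h2
    have hlw : lam * w ^ k = ν := by
      apply mul_right_cancel₀ hak
      linear_combination h1
    have hz : μ * PowerSeries.coeff k A = 0 := by
      linear_combination h2 - (PowerSeries.coeff k B) * hlw
    exact hak ((mul_eq_zero.mp hz).resolve_left hμ)
  have hA0 : A = 0 := PowerSeries.ext hAk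
  have hF0 : F = 0 := by
    have : F * (U⁻¹ * U) = 0 := by
      rw [← mul_assoc, ← hA, hA0, zero_mul]
    rwa [PowerSeries.inv_mul_cancel _ hU0, mul_one] at this
  rwa [hF, Polynomial.coe_eq_zero_iff] at hF0

end QuasiConstantAux

open Filter Finset in
/-- A quasi-constant of the form `c(x) = x^α r(x, log x)`, with `r` rational in `x` and
polynomial in the second variable, does not depend on the second variable: in a
representation `r(x,y) = ∑_i (P_i(x)/Q_i(x)) y^i` all higher coefficients vanish. -/
theorem quasi_constant_is_log_free (q : ℂ) (hq0 : q ≠ 0) (hq1 : q ≠ 1) (hqm1 : q ≠ -1)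
    (α : ℂ) (n : ℕ) (P Q : Fin (n + 1) → Polynomial ℂ) (hQ : ∀ i, Q i ≠ 0)
    (c : ℂ → ℂ)
    (hc : ∀ x : ℂ, c x =
      x ^ α * ∑ i : Fin (n + 1), ((P i).eval x / (Q i).eval x) * Complex.log x ^ (i : ℕ))
    (hqc : ∀ x : ℂ, c (x * q ^ (-2 : ℤ)) = c x) :
    ∀ i : Fin (n + 1), (i : ℕ) ≠ 0 → P i = 0 := by
  intro i0 hi0
  by_contra hPi
  set w : ℂ := q ^ (-2 : ℤ) with hwdef
  have hw0 : w ≠ 0 := zpow_ne_zero _ hq0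
  have hw1 : w ≠ 1 := by
    intro hcon
    have h2 : q ^ (2 : ℕ) = 1 := by
      have hinv : (q ^ (2 : ℕ))⁻¹ = 1 := by
        rw [← zpow_natCast, ← zpow_neg]
        exact_mod_cast hcon
      exact inv_eq_one.mp hinv
    have hfac : (q - 1) * (q + 1) = 0 := by linear_combination h2
    rcases mul_eq_zero.mp hfac with h | h
    · exact hq1 (sub_eq_zero.mp h)
    · exact hqm1 (eq_neg_of_add_eq_zero_left h)
  set β : ℂ := Complex.log w with hβdef
  have hβ : β ≠ 0 := by
    intro h
    apply hw1
    have hel := Complex.exp_log hw0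
    rw [← hβdef, h, Complex.exp_zero] at hel
    exact hel.symm
  set lam : ℂ := w ^ α with hlamdef
  set P' : ℕ → ℂ[X] := fun k => if h : k < n + 1 then P ⟨k, h⟩ else 0 with hP'
  set Q' : ℕ → ℂ[X] := fun k => if h : k < n + 1 then Q ⟨k, h⟩ else 1 with hQ'
  have hQ'0 : ∀ k, Q' k ≠ 0 := by
    intro k
    simp only [hQ']
    split
    · exact hQ _
    · exact one_ne_zero
  set D : ℂ[X] := ∏ k ∈ range (n + 1), Q' k with hDdef
  have hD0 : D ≠ 0 := prod_ne_zero_iff.mpr fun k _ => hQ'0 k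
  set p : ℕ → ℂ[X] := fun k => P' k * ∏ j ∈ (range (n + 1)).erase k, Q' j with hpdef
  have hDfactor : ∀ k ∈ range (n + 1),
      Q' k * ∏ j ∈ (range (n + 1)).erase k, Q' j = D :=
    fun k hk => Finset.mul_prod_erase _ _ hk
  have hkey : ∀ (z : ℂ) (k : ℕ), k ∈ range (n + 1) → D.eval z ≠ 0 →
      (P' k).eval z / (Q' k).eval z * D.eval z = (p k).eval z := by
    intro z k hk hz
    have hQz : (Q' k).eval z ≠ 0 := by
      intro h0
      apply hz
      rw [← hDfactor k hk, eval_mul, h0, zero_mul]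
    simp only [hpdef]
    rw [← hDfactor k hk, eval_mul, eval_mul]
    field_simp
  -- the functional equation on the positive real axis, denominators cleared
  have hfun : ∀ x : ℝ, 0 < x → D.eval ↑x ≠ 0 → D.eval (↑x * w) ≠ 0 →
      lam * D.eval ↑x * ∑ k ∈ range (n + 1), (p k).eval (↑x * w)
          * (Complex.log ↑x + β) ^ k
        = D.eval (↑x * w) * ∑ k ∈ range (n + 1), (p k).eval ↑x * Complex.log ↑x ^ k := by
    intro x hx hDx hDxw
    have hx0 : (x : ℂ) ≠ 0 := Complex.ofReal_ne_zero.mpr (ne_of_gt hx)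
    have hxw0 : (x : ℂ) * w ≠ 0 := mul_ne_zero hx0 hw0
    have hlogmul : Complex.log (↑x * w) = Complex.log ↑x + β := by
      rw [Complex.log_ofReal_mul hx hw0, ← Complex.ofReal_log hx.le, ← hβdef]
    have hcpow : ((x : ℂ) * w) ^ α = (x : ℂ) ^ α * lam := by
      rw [Complex.cpow_def_of_ne_zero hxw0, Complex.cpow_def_of_ne_zero hx0, hlamdef,
        Complex.cpow_def_of_ne_zero hw0, hlogmul, ← Complex.exp_add]
      congr 1
      rw [hβdef]
      ring
    have hxa : (x : ℂ) ^ α ≠ 0 := by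
      rw [Complex.cpow_def_of_ne_zero hx0]
      exact Complex.exp_ne_zero _
    have hFin : ∀ z L : ℂ, (∑ i : Fin (n + 1),
          (P i).eval z / (Q i).eval z * L ^ (i : ℕ))
        = ∑ k ∈ range (n + 1), (P' k).eval z / (Q' k).eval z * L ^ k := by
      intro z L
      rw [← Fin.sum_univ_eq_sum_range (fun k => (P' k).eval z / (Q' k).eval z * L ^ k) (n + 1)]
      apply Finset.sum_congr rfl
      intro i _
      have hi : (i : ℕ) < n + 1 := i.isLt
      simp only [hP', hQ', dif_pos hi, Fin.eta]
    have h3 := hqc (x : ℂ)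
    rw [hc ((x : ℂ) * w), hc (x : ℂ), hcpow, hlogmul, hFin, hFin] at h3
    have h4 : lam * ∑ k ∈ range (n + 1),
          (P' k).eval (↑x * w) / (Q' k).eval (↑x * w) * (Complex.log ↑x + β) ^ k
        = ∑ k ∈ range (n + 1), (P' k).eval ↑x / (Q' k).eval ↑x * Complex.log ↑x ^ k := by
      apply mul_left_cancel₀ hxa
      linear_combination h3
    have hS1 : ∑ k ∈ range (n + 1), (p k).eval (↑x * w) * (Complex.log ↑x + β) ^ k
        = D.eval (↑x * w) * ∑ k ∈ range (n + 1),
            (P' k).eval (↑x * w) / (Q' k).eval (↑x * w) * (Complex.log ↑x + β) ^ k := by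
      rw [Finset.mul_sum]
      apply Finset.sum_congr rfl
      intro k hk
      rw [← hkey _ k hk hDxw]
      ring
    have hS2 : ∑ k ∈ range (n + 1), (p k).eval ↑x * Complex.log ↑x ^ k
        = D.eval ↑x * ∑ k ∈ range (n + 1),
            (P' k).eval ↑x / (Q' k).eval ↑x * Complex.log ↑x ^ k := by
      rw [Finset.mul_sum]
      apply Finset.sum_congr rfl
      intro k hk
      rw [← hkey _ k hk hDx]
      ring
    rw [hS1, hS2]
    linear_combination (D.eval ↑x * D.eval ((x : ℂ) * w)) * h4
  -- binomial expansion helper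
  have hbinom : ∀ (L : ℂ) (k : ℕ), k ∈ range (n + 1) →
      (L + β) ^ k = ∑ j ∈ range (n + 1), (k.choose j : ℂ) * β ^ (k - j) * L ^ j := by
    intro L k hk
    have hkn : k + 1 ≤ n + 1 := by
      have := mem_range.mp hk
      omega
    calc (L + β) ^ k = ∑ j ∈ range (k + 1), L ^ j * β ^ (k - j) * (k.choose j : ℂ) :=
          add_pow L β k
      _ = ∑ j ∈ range (n + 1), L ^ j * β ^ (k - j) * (k.choose j : ℂ) := by
          apply Finset.sum_subset (by simpa using hkn)
          intro j _ hj
          have : k < j := by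
            simp only [mem_range] at hj
            omega
          rw [Nat.choose_eq_zero_of_lt this]
          simp
      _ = ∑ j ∈ range (n + 1), (k.choose j : ℂ) * β ^ (k - j) * L ^ j := by
          apply Finset.sum_congr rfl
          intro j _
          ring
  have hDw0 : D.comp (C w * X) ≠ 0 := by
    intro h0
    apply hD0
    ext k
    have hck := congrArg (fun r : ℂ[X] => r.coeff k) h0
    simp only [coeff_comp_C_mul_X, coeff_zero] at hck
    rcases mul_eq_zero.mp hck with h | h
    · exact absurd h (pow_ne_zero _ hw0)
    · simpa using h
  -- the polynomial identities
  have hTzero : ∀ j, j ≤ n →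
      C lam * D * (∑ k ∈ range (n + 1),
          C ((k.choose j : ℂ) * β ^ (k - j)) * ((p k).comp (C w * X)))
        - (D.comp (C w * X)) * p j = 0 := by
    have hev : ∀ᶠ x : ℝ in atTop, ∑ j ∈ range (n + 1),
        (C lam * D * (∑ k ∈ range (n + 1),
            C ((k.choose j : ℂ) * β ^ (k - j)) * ((p k).comp (C w * X)))
          - (D.comp (C w * X)) * p j).eval ↑x * Complex.log ↑x ^ j = 0 := by
      filter_upwards [eventually_eval_ne D hD0,
        eventually_eval_ne (D.comp (C w * X)) hDw0,
        eventually_gt_atTop (0 : ℝ)] with x hx1 hx2 hx0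
      have hx2' : D.eval ((x : ℂ) * w) ≠ 0 := by
        rwa [eval_comp, eval_mul, eval_C, eval_X, mul_comm] at hx2
      have hfx := hfun x hx0 hx1 hx2'
      rw [mul_comm (x : ℂ) w] at hfx
      have hTj : ∀ j, (C lam * D * (∑ k ∈ range (n + 1),
            C ((k.choose j : ℂ) * β ^ (k - j)) * ((p k).comp (C w * X)))
          - (D.comp (C w * X)) * p j).eval ↑x
          = lam * D.eval ↑x * (∑ k ∈ range (n + 1),
              ((k.choose j : ℂ) * β ^ (k - j)) * (p k).eval (w * ↑x))
            - D.eval (w * ↑x) * (p j).eval ↑x := by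
        intro j
        simp only [eval_sub, eval_mul, eval_C, eval_finset_sum, eval_comp, eval_X]
      have hswap : ∑ j ∈ range (n + 1), (∑ k ∈ range (n + 1),
            ((k.choose j : ℂ) * β ^ (k - j)) * (p k).eval (w * ↑x)) * Complex.log ↑x ^ j
          = ∑ k ∈ range (n + 1), (p k).eval (w * ↑x) * (Complex.log ↑x + β) ^ k := by
        calc ∑ j ∈ range (n + 1), (∑ k ∈ range (n + 1),
              ((k.choose j : ℂ) * β ^ (k - j)) * (p k).eval (w * ↑x)) * Complex.log ↑x ^ j
            = ∑ j ∈ range (n + 1), ∑ k ∈ range (n + 1),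
              ((k.choose j : ℂ) * β ^ (k - j)) * (p k).eval (w * ↑x) * Complex.log ↑x ^ j :=
              Finset.sum_congr rfl fun j _ => Finset.sum_mul _ _ _
          _ = ∑ k ∈ range (n + 1), ∑ j ∈ range (n + 1),
              ((k.choose j : ℂ) * β ^ (k - j)) * (p k).eval (w * ↑x) * Complex.log ↑x ^ j :=
              Finset.sum_comm
          _ = ∑ k ∈ range (n + 1), (p k).eval (w * ↑x) * (Complex.log ↑x + β) ^ k := by
              apply Finset.sum_congr rfl
              intro k hk
              rw [hbinom (Complex.log ↑x) k hk, Finset.mul_sum]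
              apply Finset.sum_congr rfl
              intro j _
              ring
      calc ∑ j ∈ range (n + 1), (C lam * D * (∑ k ∈ range (n + 1),
              C ((k.choose j : ℂ) * β ^ (k - j)) * ((p k).comp (C w * X)))
            - (D.comp (C w * X)) * p j).eval ↑x * Complex.log ↑x ^ j
          = ∑ j ∈ range (n + 1), (lam * D.eval ↑x * (∑ k ∈ range (n + 1),
                ((k.choose j : ℂ) * β ^ (k - j)) * (p k).eval (w * ↑x))
              - D.eval (w * ↑x) * (p j).eval ↑x) * Complex.log ↑x ^ j :=
            Finset.sum_congr rfl fun j _ => by rw [hTj j]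
        _ = lam * D.eval ↑x * (∑ k ∈ range (n + 1),
              (p k).eval (w * ↑x) * (Complex.log ↑x + β) ^ k)
            - D.eval (w * ↑x) * ∑ j ∈ range (n + 1), (p j).eval ↑x * Complex.log ↑x ^ j := by
            simp only [sub_mul]
            rw [Finset.sum_sub_distrib]
            congr 1
            · rw [← hswap, Finset.mul_sum]
              apply Finset.sum_congr rfl
              intro j _
              ring
            · rw [Finset.mul_sum]
              apply Finset.sum_congr rfl
              intro j _
              ring
        _ = 0 := by
            rw [hfx]
            ring
    intro j hj
    exact log_poly_eq_zero n _ hev j hj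
  -- pick the maximal bad index
  have hsne : ∃ m, (m ∈ (range (n + 1)).filter (fun k => k ≠ 0 ∧ p k ≠ 0)) ∧
      ∀ k ∈ (range (n + 1)).filter (fun k => k ≠ 0 ∧ p k ≠ 0), k ≤ m := by
    have hne : ((range (n + 1)).filter (fun k => k ≠ 0 ∧ p k ≠ 0)).Nonempty := by
      refine ⟨(i0 : ℕ), ?_⟩
      rw [mem_filter]
      refine ⟨mem_range.mpr i0.isLt, hi0, ?_⟩
      simp only [hpdef]
      apply mul_ne_zero
      · simp only [hP', dif_pos i0.isLt, Fin.eta]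
        exact hPi
      · exact prod_ne_zero_iff.mpr fun j _ => hQ'0 j
    exact ⟨_, Finset.max'_mem _ hne, fun k hk => Finset.le_max' _ k hk⟩
  obtain ⟨m, hmmem, hmle⟩ := hsne
  rw [mem_filter] at hmmem
  obtain ⟨hmrange, hm0, hpm⟩ := hmmem
  have hmax : ∀ k, m < k → p k = 0 := by
    intro k hk
    by_cases hkr : k < n + 1
    · by_contra hpk
      have hks : k ∈ (range (n + 1)).filter (fun k => k ≠ 0 ∧ p k ≠ 0) := by
        rw [mem_filter]
        exact ⟨mem_range.mpr hkr, by omega, hpk⟩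
      have := hmle k hks
      omega
    · simp only [hpdef, hP', dif_neg hkr, zero_mul]
  have hmrange' : m < n + 1 := mem_range.mp hmrange
  obtain ⟨m', rfl⟩ : ∃ m', m = m' + 1 := ⟨m - 1, by omega⟩
  -- extract the two equations
  have hsum1 : ∑ k ∈ range (n + 1),
      C ((k.choose (m' + 1) : ℂ) * β ^ (k - (m' + 1))) * ((p k).comp (C w * X))
      = (p (m' + 1)).comp (C w * X) := by
    rw [Finset.sum_eq_single (m' + 1)]
    · simp [Nat.choose_self]
    · intro k _ hne
      rcases lt_or_gt_of_ne hne with hlt | hgt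
      · rw [Nat.choose_eq_zero_of_lt hlt]
        simp
      · rw [hmax k hgt]
        simp
    · intro h
      exact absurd (mem_range.mpr (by omega)) h
  have hsum2 : ∑ k ∈ range (n + 1),
      C ((k.choose m' : ℂ) * β ^ (k - m')) * ((p k).comp (C w * X))
      = (p m').comp (C w * X)
        + C (((m' + 1 : ℕ) : ℂ) * β) * ((p (m' + 1)).comp (C w * X)) := by
    have hsub : ({m', m' + 1} : Finset ℕ) ⊆ range (n + 1) := by
      intro k hk
      simp only [mem_insert, mem_singleton] at hk
      rcases hk with rfl | rfl <;> exact mem_range.mpr (by omega)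
    rw [← Finset.sum_subset hsub ?hzero]
    · rw [Finset.sum_pair (by omega : m' ≠ m' + 1)]
      congr 1
      · simp [Nat.choose_self, Nat.sub_self]
      · rw [Nat.choose_succ_self_right, show m' + 1 - m' = 1 by omega, pow_one]
    case hzero =>
      intro k hk hknot
      simp only [mem_insert, mem_singleton] at hknot
      push_neg at hknot
      obtain ⟨hk1, hk2⟩ := hknot
      rcases lt_or_gt_of_ne hk1 with hlt | hgt
      · rw [Nat.choose_eq_zero_of_lt hlt]
        simp
      · have : m' + 1 < k := by omega
        rw [hmax k this]
        simp
  have E1 : C lam * D * ((p (m' + 1)).comp (C w * X))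
      = (D.comp (C w * X)) * p (m' + 1) := by
    have h1 := hTzero (m' + 1) (by omega)
    rw [hsum1] at h1
    exact sub_eq_zero.mp h1
  have E2 : C lam * D * ((p m').comp (C w * X)
        + C (((m' + 1 : ℕ) : ℂ) * β) * ((p (m' + 1)).comp (C w * X)))
      = (D.comp (C w * X)) * p m' := by
    have h2 := hTzero m' (by omega)
    rw [hsum2] at h2
    exact sub_eq_zero.mp h2
  -- strip the power of X dividing D
  obtain ⟨D1, hD1eq, hD1nd⟩ :=
    Polynomial.exists_eq_pow_rootMultiplicity_mul_and_not_dvd D hD0 0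
  rw [C_0, sub_zero] at hD1eq hD1nd
  set s' := Polynomial.rootMultiplicity 0 D with hs'
  have hD1c : D1.coeff 0 ≠ 0 := fun h => hD1nd (Polynomial.X_dvd_iff.mpr h)
  have hDcomp : D.comp (C w * X) = C (w ^ s') * (X ^ s' * D1.comp (C w * X)) := by
    rw [hD1eq, mul_comp, pow_comp, X_comp, mul_pow, ← C_pow]
    ring
  have hXs : (X : ℂ[X]) ^ s' ≠ 0 := pow_ne_zero _ X_ne_zero
  have E1' : C lam * D1 * ((p (m' + 1)).comp (C w * X))
      = C (w ^ s') * D1.comp (C w * X) * p (m' + 1) := by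
    apply mul_left_cancel₀ hXs
    rw [hDcomp, hD1eq] at E1
    linear_combination E1
  have E2' : C lam * D1 * ((p m').comp (C w * X))
      + C (((m' + 1 : ℕ) : ℂ) * β) * C (w ^ s') * (D1.comp (C w * X) * p (m' + 1))
      = C (w ^ s') * D1.comp (C w * X) * p m' := by
    apply mul_left_cancel₀ hXs
    rw [hDcomp, hD1eq] at E2
    linear_combination E2 - (X : ℂ[X]) ^ s' * C (((m' + 1 : ℕ) : ℂ) * β) * E1'
  have hμ : ((m' + 1 : ℕ) : ℂ) * β * w ^ s' ≠ 0 := by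
    apply mul_ne_zero (mul_ne_zero _ hβ) (pow_ne_zero _ hw0)
    exact_mod_cast Nat.succ_ne_zero m'
  have hfinal : p (m' + 1) = 0 := by
    apply core_vanish w lam (w ^ s') (((m' + 1 : ℕ) : ℂ) * β * w ^ s') hμ D1
      (p (m' + 1)) (p m') hD1c E1'
    rw [C_mul]
    linear_combination E2'
  exact hpm hfinal
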